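/- For every graph G and every c in [1/2, 1), the bramble number satisfies bn(G) <= (1/(1-c)) * sep*_c(G). -/

import Mathlib

open SimpleGraph

namespace TWPaper

/-- `(T, B)` is a tree decomposition of `G`. -/
def IsTreeDecomp {V ι : Type*} (G : SimpleGraph V) (T : SimpleGraph ι) (B : ι → Set V) : Prop :=
  T.IsTree ∧
  (∀ v w : V, G.Adj v w → ∃ x, v ∈ B x ∧ w ∈ B x) ∧
  (∀ v : V, (T.induce {x | v ∈ B x}).Connected)

/-- `G` has a tree decomposition of width at most `k`. -/
def HasTDWidthLE {V : Type*} (G : SimpleGraph V) (k : ℕ) : Prop :=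
  ∃ (ι : Type) (T : SimpleGraph ι) (B : ι → Set V),
    IsTreeDecomp G T B ∧ ∀ x, (B x).ncard ≤ k + 1

/-- Treewidth of `G`. -/
noncomputable def treewidth {V : Type*} (G : SimpleGraph V) : ℕ :=
  sInf {k | HasTDWidthLE G k}

/-- Two vertex sets touch: they intersect or an edge joins them. -/
def Touches {V : Type*} (G : SimpleGraph V) (A B : Set V) : Prop :=
  (A ∩ B).Nonempty ∨ ∃ a ∈ A, ∃ b ∈ B, G.Adj a b

/-- A bramble: a set of connected subgraphs (given by vertex sets) that pairwise touch. -/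
def IsBramble {V : Type*} (G : SimpleGraph V) (𝓑 : Set (Set V)) : Prop :=
  (∀ A ∈ 𝓑, (G.induce A).Connected) ∧ ∀ A ∈ 𝓑, ∀ B ∈ 𝓑, Touches G A B

/-- `S` hits every element of `𝓑`. -/
def IsHitting {V : Type*} (𝓑 : Set (Set V)) (S : Set V) : Prop :=
  ∀ A ∈ 𝓑, (S ∩ A).Nonempty

/-- The order of a bramble: minimum size of a hitting set. -/
noncomputable def brambleOrder {V : Type*} (𝓑 : Set (Set V)) : ℕ :=
  sInf {n | ∃ S : Set V, IsHitting 𝓑 S ∧ S.ncard = n}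

/-- The bramble number: maximum order of a bramble. -/
noncomputable def brambleNumber {V : Type*} (G : SimpleGraph V) : ℕ :=
  sSup {n | ∃ 𝓑 : Set (Set V), IsBramble G 𝓑 ∧ brambleOrder 𝓑 = n}

/-- A tangle: connected subgraphs such that any three share a vertex or
meet a common edge's endpoints. -/
def IsTangle {V : Type*} (G : SimpleGraph V) (τ : Set (Set V)) : Prop :=
  (∀ A ∈ τ, (G.induce A).Connected) ∧
  ∀ A ∈ τ, ∀ B ∈ τ, ∀ C ∈ τ,
    (∃ v, v ∈ A ∩ B ∩ C) ∨
    ∃ u v, G.Adj u v ∧ (u ∈ A ∨ v ∈ A) ∧ (u ∈ B ∨ v ∈ B) ∧ (u ∈ C ∨ v ∈ C)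

/-- The tangle number: maximum order of a tangle. -/
noncomputable def tangleNumber {V : Type*} (G : SimpleGraph V) : ℕ :=
  sSup {n | ∃ τ : Set (Set V), IsTangle G τ ∧ brambleOrder τ = n}

/-- `G - X` : delete the vertices of `X` (kept on the same vertex type,
vertices of `X` become isolated). -/
def delVerts {V : Type*} (G : SimpleGraph V) (X : Set V) : SimpleGraph V where
  Adj a b := G.Adj a b ∧ a ∉ X ∧ b ∉ X
  symm := by
    refine ⟨?_⟩
    intro a b h
    exact ⟨h.1.symm, h.2.2, h.2.1⟩
  loopless := by
    refine ⟨?_⟩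
    intro a h
    exact G.irrefl h.1

/-- The vertex set of the component of `G - X` containing `v`. -/
def comp {V : Type*} (G : SimpleGraph V) (X : Set V) (v : V) : Set V :=
  {w | (delVerts G X).Reachable v w}

/-- `X` is a `(k, S, c)`-separator of `G`. -/
def IsSeparator {V : Type*} (G : SimpleGraph V) (k : ℕ) (S : Set V) (c : ℝ) (X : Set V) : Prop :=
  X.ncard ≤ k ∧
  ∀ v ∉ X, ((comp G X v ∩ S).ncard : ℝ) ≤ c * ((S \ X).ncard : ℝ)

/-- The separation number `sep_c(G)`. -/
noncomputable def sepNum {V : Type*} (G : SimpleGraph V) (c : ℝ) : ℕ :=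
  sInf {k | ∀ S : Set V, ∃ X : Set V, IsSeparator G k S c X}

/-- `X` is a `(k, S, c)*`-separator of `G`. -/
def IsStarSeparator {V : Type*} (G : SimpleGraph V) (k : ℕ) (S : Set V) (c : ℝ) (X : Set V) :
    Prop :=
  X.ncard ≤ k ∧
  ∀ v ∉ X, ((comp G X v ∩ (S \ X)).ncard : ℝ) ≤ c * (S.ncard : ℝ)

/-- The variant separation number `sep*_c(G)`. -/
noncomputable def sepStarNum {V : Type*} (G : SimpleGraph V) (c : ℝ) : ℕ :=
  sInf {k | ∀ S : Set V, ∃ X : Set V, IsStarSeparator G k S c X}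

/-- `G` has a branch decomposition of width at most `w`. -/
def HasBDWidthLE {V : Type*} (G : SimpleGraph V) (w : ℕ) : Prop :=
  ∃ (ι : Type) (_ : Finite ι) (T : SimpleGraph ι), T.IsTree ∧
    (∀ x : ι, (T.neighborSet x).ncard = 3 ∨ (T.neighborSet x).ncard = 1) ∧
    ∃ θ : G.edgeSet ≃ {x : ι // (T.neighborSet x).ncard = 1},
      ∀ a b : ι, T.Adj a b →
        {v : V | ∃ e₁ e₂ : G.edgeSet, v ∈ e₁.1 ∧ v ∈ e₂.1 ∧
          ¬ (T.deleteEdges {s(a, b)}).Reachable (θ e₁).1 (θ e₂).1}.ncard ≤ w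

/-- Branchwidth of `G` (`0` if no branch decomposition exists). -/
noncomputable def branchwidth {V : Type*} (G : SimpleGraph V) : ℕ :=
  sInf {w | HasBDWidthLE G w}

/-- `H` is a minor of `G`, via a model of branch sets. -/
def IsMinor {W V : Type*} (H : SimpleGraph W) (G : SimpleGraph V) : Prop :=
  ∃ f : W → Set V,
    (∀ w, (G.induce (f w)).Connected) ∧
    (∀ a b, a ≠ b → Disjoint (f a) (f b)) ∧
    ∀ a b, H.Adj a b → ∃ u ∈ f a, ∃ v ∈ f b, G.Adj u v

/-- The lexicographic product `T[K_k]`. -/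
def treeLex {ι : Type*} (T : SimpleGraph ι) (k : ℕ) : SimpleGraph (ι × Fin k) where
  Adj a b := T.Adj a.1 b.1 ∨ (a.1 = b.1 ∧ a.2 ≠ b.2)
  symm := by
    refine ⟨?_⟩
    rintro a b (h | ⟨h1, h2⟩)
    · exact Or.inl h.symm
    · exact Or.inr ⟨h1.symm, h2.symm⟩
  loopless := by
    refine ⟨?_⟩
    rintro a (h | ⟨h1, h2⟩)
    · exact T.irrefl h
    · exact h2 rfl

/-- The lexicographic tree product number. -/
noncomputable def ltp {V : Type*} (G : SimpleGraph V) : ℕ :=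
  sInf {k | ∃ (ι : Type) (T : SimpleGraph ι), T.IsTree ∧ IsMinor G (treeLex T k)}

/-- The cartesian tree product number. -/
noncomputable def ctp {V : Type*} (G : SimpleGraph V) : ℕ :=
  sInf {k | ∃ (ι : Type) (T : SimpleGraph ι), T.IsTree ∧
    IsMinor G (T.boxProd (completeGraph (Fin k)))}

/-- `S` is `k`-linked in `G`. -/
def IsLinked {V : Type*} (G : SimpleGraph V) (k : ℕ) (S : Set V) : Prop :=
  ∀ X : Set V, X.ncard < k → ∃ v, v ∉ X ∧ S.ncard < 2 * (comp G X v ∩ S).ncard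

/-- The linkedness of `G`: maximum `k ≥ 1` for which `G` has a `k`-linked set. -/
noncomputable def linkedness {V : Type*} (G : SimpleGraph V) : ℕ :=
  sSup {k | 0 < k ∧ ∃ S : Set V, IsLinked G k S}

/-- `S` is well-linked in `G`. -/
def WellLinked {V : Type*} (G : SimpleGraph V) (S : Set V) : Prop :=
  ∀ A B : Finset V, ↑A ⊆ S → ↑B ⊆ S → A.card = B.card →
    ∃ (σ : A ≃ B) (p : ∀ a : A, G.Walk (a : V) ((σ a : V))),
      (∀ a, (p a).IsPath) ∧
      ∀ a a' : A, a ≠ a' → ∀ v, v ∈ (p a).support → v ∉ (p a').support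

/-- `S` is externally-well-linked in `G`: the linking paths can be chosen with
no internal vertices in `S`. -/
def ExternallyWellLinked {V : Type*} (G : SimpleGraph V) (S : Set V) : Prop :=
  ∀ A B : Finset V, ↑A ⊆ S → ↑B ⊆ S → A.card = B.card →
    ∃ (σ : A ≃ B) (p : ∀ a : A, G.Walk (a : V) ((σ a : V))),
      (∀ a, (p a).IsPath) ∧
      (∀ a a' : A, a ≠ a' → ∀ v, v ∈ (p a).support → v ∉ (p a').support) ∧
      ∀ a : A, ∀ v ∈ (p a).support, v ∈ S → v = (a : V) ∨ v = ((σ a : V))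

/-- The well-linked number of `G`. -/
noncomputable def wellLinkedNum {V : Type*} (G : SimpleGraph V) : ℕ :=
  sSup {n | ∃ S : Set V, WellLinked G S ∧ S.ncard = n}

/-- A graph is chordal if every cycle of length at least 4 has a chord
(equivalently, there is no induced cycle of length at least four). -/
def Chordal {V : Type*} (H : SimpleGraph V) : Prop :=
  ∀ (v : V) (c : H.Walk v v), c.IsCycle → 4 ≤ c.length →
    ∃ a b, a ∈ c.support ∧ b ∈ c.support ∧ H.Adj a b ∧ s(a, b) ∉ c.edges

/-- `G` is a `k`-tree. -/
inductive IsKTree (k : ℕ) : ∀ (V : Type), SimpleGraph V → Prop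
  | base (V : Type) (G : SimpleGraph V) (h : Nonempty (G ≃g completeGraph (Fin (k + 1)))) :
      IsKTree k V G
  | step (V : Type) (G : SimpleGraph V) (v : V)
      (hdeg : (G.neighborSet v).ncard = k)
      (hcl : G.IsClique (G.neighborSet v))
      (h : IsKTree k ↥{u : V | u ≠ v} (G.induce {u : V | u ≠ v})) :
      IsKTree k V G

/-- The `k × k` grid graph. -/
def grid (k : ℕ) : SimpleGraph (Fin k × Fin k) where
  Adj a b := (a.1 = b.1 ∧ (a.2.val + 1 = b.2.val ∨ b.2.val + 1 = a.2.val)) ∨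
             (a.2 = b.2 ∧ (a.1.val + 1 = b.1.val ∨ b.1.val + 1 = a.1.val))
  symm := by
    refine ⟨?_⟩
    rintro a b (⟨h1, h2⟩ | ⟨h1, h2⟩)
    · exact Or.inl ⟨h1.symm, h2.symm⟩
    · exact Or.inr ⟨h1.symm, h2.symm⟩
  loopless := by
    refine ⟨?_⟩
    rintro a (⟨h1, h2⟩ | ⟨h1, h2⟩) <;> omega

/-!
If `S` is a minimum hitting set of a bramble `𝓑` and `X` a `(k, S, c)*`-separator, then either
`X` already hits `𝓑`, or some `A ∈ 𝓑` avoids `X`. In the latter case every element of `𝓑` that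
avoids `X` touches `A`, so lies in the component `C` of `G - X` containing `A`; hence
`X ∪ (C ∩ S)` hits `𝓑`, and `C` contains at most `c |S|` vertices of `S - X`. Either way
`|S| ≤ k + c |S|`, that is `(1 - c) bn(G) ≤ sep*_c(G)`.
-/

section

variable {V : Type*} {G : SimpleGraph V}

lemma subset_comp_of_connected {A X : Set V} {a : V} (hA : (G.induce A).Connected)
    (hAX : Disjoint A X) (ha : a ∈ A) : A ⊆ comp G X a := by
  intro b hb
  let f : G.induce A →g delVerts G X :=
    { toFun := Subtype.val
      map_rel' := fun {u w} h => ⟨h, hAX.notMem_of_mem_left u.2, hAX.notMem_of_mem_left w.2⟩ }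
  exact (hA.preconnected ⟨a, ha⟩ ⟨b, hb⟩).map f

lemma subset_comp_of_touches {A B X : Set V} {a : V} (hA : (G.induce A).Connected)
    (hB : (G.induce B).Connected) (hAX : Disjoint A X) (hBX : Disjoint B X)
    (hAB : Touches G A B) (ha : a ∈ A) : B ⊆ comp G X a := by
  intro b hb
  rcases hAB with ⟨w, hwA, hwB⟩ | ⟨u, huA, w, hwB, huw⟩
  · exact (subset_comp_of_connected hA hAX ha hwA).trans
      (subset_comp_of_connected hB hBX hwB hb)
  · have huw' : (delVerts G X).Adj u w :=
      ⟨huw, hAX.notMem_of_mem_left huA, hBX.notMem_of_mem_left hwB⟩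
    exact ((subset_comp_of_connected hA hAX ha huA).trans huw'.reachable).trans
      (subset_comp_of_connected hB hBX hwB hb)

lemma IsHitting.union_comp_inter_diff {𝓑 : Set (Set V)} {S X A : Set V} {v : V}
    (hS : IsHitting 𝓑 S) (h𝓑 : IsBramble G 𝓑) (hA : A ∈ 𝓑) (hAX : Disjoint A X)
    (hv : v ∈ A) : IsHitting 𝓑 (X ∪ comp G X v ∩ (S \ X)) := by
  intro B hB
  by_cases hBX : Disjoint B X
  · obtain ⟨s, hsS, hsB⟩ := hS B hB
    have hsC : s ∈ comp G X v :=
      subset_comp_of_touches (h𝓑.1 A hA) (h𝓑.1 B hB) hAX hBX (h𝓑.2 A hA B hB) hv hsB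
    exact ⟨s, Or.inr ⟨hsC, hsS, hBX.notMem_of_mem_left hsB⟩, hsB⟩
  · obtain ⟨x, hxB, hxX⟩ := Set.not_disjoint_iff.mp hBX
    exact ⟨x, Or.inl hxX, hxB⟩

lemma brambleOrder_le_ncard {𝓑 : Set (Set V)} {S : Set V} (hS : IsHitting 𝓑 S) :
    brambleOrder 𝓑 ≤ S.ncard :=
  Nat.sInf_le ⟨S, hS, rfl⟩

lemma IsHitting.exists_ncard_eq_brambleOrder {𝓑 : Set (Set V)} {S : Set V}
    (hS : IsHitting 𝓑 S) : ∃ T, IsHitting 𝓑 T ∧ T.ncard = brambleOrder 𝓑 :=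
  Nat.sInf_mem (s := {n | ∃ T, IsHitting 𝓑 T ∧ T.ncard = n}) ⟨S.ncard, S, hS, rfl⟩

lemma IsBramble.isHitting_univ {𝓑 : Set (Set V)} (h𝓑 : IsBramble G 𝓑) :
    IsHitting 𝓑 Set.univ := fun A hA => by
  obtain ⟨⟨a, ha⟩⟩ := (h𝓑.1 A hA).nonempty
  exact ⟨a, trivial, ha⟩

lemma brambleOrder_le_add_of_isStarSeparator {𝓑 : Set (Set V)} {S X : Set V} {k : ℕ} {c : ℝ}
    (h𝓑 : IsBramble G 𝓑) (hS : IsHitting 𝓑 S) (hc : 0 ≤ c) (hX : IsStarSeparator G k S c X) :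
    (brambleOrder 𝓑 : ℝ) ≤ k + c * S.ncard := by
  have hXk : (X.ncard : ℝ) ≤ k := by exact_mod_cast hX.1
  by_cases hXhit : IsHitting 𝓑 X
  · have : (brambleOrder 𝓑 : ℝ) ≤ X.ncard := by exact_mod_cast brambleOrder_le_ncard hXhit
    have : 0 ≤ c * S.ncard := mul_nonneg hc S.ncard.cast_nonneg
    linarith
  · obtain ⟨A, hA, hAX⟩ : ∃ A ∈ 𝓑, Disjoint A X := by
      simpa [IsHitting, Set.not_nonempty_iff_eq_empty, Set.disjoint_iff_inter_eq_empty,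
        Set.inter_comm] using hXhit
    obtain ⟨⟨v, hv⟩⟩ := (h𝓑.1 A hA).nonempty
    have hhit := hS.union_comp_inter_diff h𝓑 hA hAX hv
    have hunion : ((X ∪ comp G X v ∩ (S \ X)).ncard : ℝ)
        ≤ X.ncard + (comp G X v ∩ (S \ X)).ncard := by
      exact_mod_cast Set.ncard_union_le _ _
    have := hX.2 v (hAX.notMem_of_mem_left hv)
    have : (brambleOrder 𝓑 : ℝ) ≤ (X ∪ comp G X v ∩ (S \ X)).ncard := by
      exact_mod_cast brambleOrder_le_ncard hhit
    linarith

lemma exists_isStarSeparator_sepStarNum (G : SimpleGraph V) (S : Set V) (c : ℝ) :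
    ∃ X, IsStarSeparator G (sepStarNum G c) S c X :=
  Nat.sInf_mem (s := {k | ∀ S : Set V, ∃ X, IsStarSeparator G k S c X})
    ⟨Set.univ.ncard, fun _ => ⟨Set.univ, le_rfl, fun v hv => absurd (Set.mem_univ v) hv⟩⟩ S

lemma one_sub_mul_brambleOrder_le_sepStarNum {𝓑 : Set (Set V)} {c : ℝ} (h𝓑 : IsBramble G 𝓑)
    (hc : 0 ≤ c) : (1 - c) * brambleOrder 𝓑 ≤ sepStarNum G c := by
  obtain ⟨S, hS, hSβ⟩ := h𝓑.isHitting_univ.exists_ncard_eq_brambleOrder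
  obtain ⟨X, hX⟩ := exists_isStarSeparator_sepStarNum G S c
  have := brambleOrder_le_add_of_isStarSeparator h𝓑 hS hc hX
  rw [hSβ] at this
  linarith

lemma brambleNumber_le_of_forall_brambleOrder_le {r : ℝ}
    (h : ∀ 𝓑, IsBramble G 𝓑 → (brambleOrder 𝓑 : ℝ) ≤ r) : (brambleNumber G : ℝ) ≤ r := by
  have hempty : IsBramble G ∅ := ⟨fun _ h => h.elim, fun _ h => h.elim⟩
  have hr : 0 ≤ r := (Nat.cast_nonneg _).trans (h ∅ hempty)
  have : brambleNumber G ≤ ⌊r⌋₊ := csSup_le ⟨_, ∅, hempty, rfl⟩ <| by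
    rintro n ⟨𝓑, h𝓑, rfl⟩
    exact Nat.le_floor (h 𝓑 h𝓑)
  exact (Nat.cast_le.mpr this).trans (Nat.floor_le hr)

end

theorem brambleNumber_le_sepStar_general {V : Type} (G : SimpleGraph V)
    (c : ℝ) (hc1 : 1 / 2 ≤ c) (hc2 : c < 1) :
    (brambleNumber G : ℝ) ≤ (1 / (1 - c)) * (sepStarNum G c : ℝ) := by
  refine brambleNumber_le_of_forall_brambleOrder_le fun 𝓑 h𝓑 => ?_
  rw [one_div_mul_eq_div, le_div_iff₀ (by linarith), mul_comm]
  exact one_sub_mul_brambleOrder_le_sepStarNum h𝓑 (by linarith)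

/-- bn(G) ≤ (1/(1-c)) · sep*_c(G) for all c ∈ [1/2, 1). -/
theorem brambleNumber_le_sepStar {V : Type} [Fintype V] (G : SimpleGraph V)
    (c : ℝ) (hc1 : 1 / 2 ≤ c) (hc2 : c < 1) :
    (brambleNumber G : ℝ) ≤ (1 / (1 - c)) * (sepStarNum G c : ℝ) :=
  brambleNumber_le_sepStar_general G c hc1 hc2

end TWPaper
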